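/- For every natural number m ≥ 2, Σ_{k=0}^{m} ((1−m)/2)_k · (−m/2)_k / ( (3/2 − m)_k · k! ) = 0, where all Pochhammer symbols are evaluated in ℝ (note (3/2 − m)_k ≠ 0 for all k, m ∈ ℕ). -/

import Mathlib

/-!
With `a = (1 - m) / 2`, `b = -m / 2` the series is balanced, `c = 3 / 2 - m = a + b + 1`, and then
its partial sums have the closed form `∑_{k ≤ n} (a)_k (b)_k / ((c)_k k!) =
(a + 1)_n (b + 1)_n / ((c)_n n!)`. At `n = m` the numerator vanishes, because one of `a + 1`,
`b + 1` is the integer `1 - ⌊m / 2⌋ ∈ (-m, 0]`, while `(c)_m` has no zero since `c` is a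
half-integer.
-/

open Polynomial Finset

noncomputable def gaussTerm {K : Type*} [Field K] (a b c : K) (k : ℕ) : K :=
  (ascPochhammer K k).eval a * (ascPochhammer K k).eval b /
    ((ascPochhammer K k).eval c * (k.factorial : K))

lemma ascPochhammer_succ_eval_left {S : Type*} [CommSemiring S] (n : ℕ) (x : S) :
    (ascPochhammer S (n + 1)).eval x = x * (ascPochhammer S n).eval (x + 1) := by
  rw [ascPochhammer_succ_left, eval_mul, eval_X, eval_comp, eval_add, eval_X, eval_one]

/-- The induction step is the identity `(c + n)(n + 1) + a b = (a + n + 1)(b + n + 1)`. -/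
theorem sum_range_gaussTerm_of_balanced {K : Type*} [Field K] [CharZero K] {a b c : K}
    (habc : c = a + b + 1) (n : ℕ) (hc : (ascPochhammer K n).eval c ≠ 0) :
    ∑ k ∈ range (n + 1), gaussTerm a b c k =
      (ascPochhammer K n).eval (a + 1) * (ascPochhammer K n).eval (b + 1) /
        ((ascPochhammer K n).eval c * (n.factorial : K)) := by
  induction n with
  | zero => simp [gaussTerm]
  | succ n ih =>
    rw [ascPochhammer_succ_eval, mul_ne_zero_iff] at hc
    obtain ⟨hcn, hcn'⟩ := hc
    have hfact : (n.factorial : K) ≠ 0 := Nat.cast_ne_zero.mpr n.factorial_ne_zero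
    rw [sum_range_succ, ih hcn, gaussTerm, ascPochhammer_succ_eval_left n a,
      ascPochhammer_succ_eval_left n b, ascPochhammer_succ_eval n (a + 1),
      ascPochhammer_succ_eval n (b + 1), ascPochhammer_succ_eval n c, Nat.factorial_succ]
    push_cast
    field_simp
    rw [habc]
    ring

lemma ascPochhammer_eval_three_halves_sub_ne_zero (m n : ℕ) :
    (ascPochhammer ℝ n).eval (3 / 2 - (m : ℝ)) ≠ 0 := by
  rw [Ne, ascPochhammer_eval_eq_zero_iff]
  rintro ⟨k, -, hk⟩
  have : ((2 * k + 3 : ℕ) : ℝ) = ((2 * m : ℕ) : ℝ) := by push_cast; linarith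
  have := Nat.cast_injective this
  omega

lemma ascPochhammer_eval_half_params_eq_zero (m : ℕ) (hm : 2 ≤ m) :
    (ascPochhammer ℝ m).eval ((1 - (m : ℝ)) / 2 + 1) *
      (ascPochhammer ℝ m).eval (-(m : ℝ) / 2 + 1) = 0 := by
  rcases Nat.even_or_odd' m with ⟨n, rfl | rfl⟩
  · refine mul_eq_zero_of_right _
      ((ascPochhammer_eval_eq_zero_iff _ _).mpr ⟨n - 1, by omega, ?_⟩)
    rw [Nat.cast_sub (by omega)]
    push_cast
    ring
  · refine mul_eq_zero_of_left
      ((ascPochhammer_eval_eq_zero_iff _ _).mpr ⟨n - 1, by omega, ?_⟩) _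
    rw [Nat.cast_sub (by omega)]
    push_cast
    ring

theorem stmt16 (m : ℕ) (hm : 2 ≤ m) :
    ∑ k ∈ Finset.range (m + 1),
      Polynomial.eval ((1 - (m : ℝ)) / 2) (ascPochhammer ℝ k) *
        Polynomial.eval (-(m : ℝ) / 2) (ascPochhammer ℝ k) /
        (Polynomial.eval (3 / 2 - (m : ℝ)) (ascPochhammer ℝ k) * (k.factorial : ℝ)) =
      0 := by
  change ∑ k ∈ range (m + 1), gaussTerm ((1 - (m : ℝ)) / 2) (-(m : ℝ) / 2) (3 / 2 - m) k = 0
  have hbalanced : 3 / 2 - (m : ℝ) = (1 - m) / 2 + -m / 2 + 1 := by ring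
  rw [sum_range_gaussTerm_of_balanced hbalanced m
    (ascPochhammer_eval_three_halves_sub_ne_zero m m),
    ascPochhammer_eval_half_params_eq_zero m hm, zero_div]
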